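/- arXiv:2105.08394 — 6 statements merged into one kernel-verified Lean document; each statement's English description precedes it below -/
import Mathlib

section
/- Let $\mathbb{F}$ be a field and $V_1,\dots,V_d$ finite-dimensional $\mathbb{F}$-vector spaces with $d \geq 2$. A tensor $T \in V_1 \otimes \cdots \otimes V_d$ has slice rank at most $r$ if and only if there exist subspaces $U_i \subseteq V_i^*$ with $\sum_{i=1}^d \mathrm{codim}(U_i) \leq r$ such that $\langle T, u_1 \otimes \cdots \otimes u_d \rangle = 0$ for all $u_i \in U_i$. -/
open scoped TensorProduct BigOperators

/-- The slice rank of a tensor in a tensor product of vector spaces: the least `r` such that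
`T` is a sum of `r` tensors, each lying (for some direction `i`) in the span of pure tensors
whose `i`-th factor is a fixed vector `u`. -/
noncomputable def tensorSliceRank (F : Type*) [Field F] {d : ℕ} (V : Fin d → Type*)
    [∀ i, AddCommGroup (V i)] [∀ i, Module F (V i)] (T : ⨂[F] i, V i) : ℕ :=
  sInf {r | ∃ S : Fin r → ⨂[F] i, V i,
    (∀ j, ∃ i : Fin d, ∃ u : V i,
      S j ∈ Submodule.span F {t | ∃ v : ∀ k, V k, v i = u ∧ t = PiTensorProduct.tprod F v}) ∧
    T = ∑ j, S j}

/-- The natural pairing `⟨T, u₁ ⊗ ⋯ ⊗ u_d⟩` of a tensor against a family of functionals. -/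
noncomputable def tensorPairing (F : Type*) [Field F] {d : ℕ} (V : Fin d → Type*)
    [∀ i, AddCommGroup (V i)] [∀ i, Module F (V i)]
    (f : ∀ i, Module.Dual F (V i)) : (⨂[F] i, V i) →ₗ[F] F :=
  PiTensorProduct.lift ((MultilinearMap.mkPiAlgebra F (Fin d) F).compLinearMap f)

/-
If `T = ∑ⱼ Sⱼ` with `Sⱼ` a slice in direction `iⱼ` with fixed factor `uⱼ`, let `Wᵢ` be the span
of the `uⱼ` with `iⱼ = i`; then `∑ dim Wᵢ ≤ r` and `T` lies in the sum of the subspaces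
`Slice(i, Wᵢ)` spanned by pure tensors whose `i`-th factor lies in `Wᵢ`. Conversely a basis of
each `Wᵢ` cuts `Slice(i, Wᵢ)` into `dim Wᵢ` slices. It remains to see that
`T ∈ ∑ᵢ Slice(i, Wᵢ)` exactly when `T` pairs to zero with all `f₁ ⊗ ⋯ ⊗ f_d`, `fᵢ ∈ Wᵢ^⊥`.
Expanding `T` in a product basis adapted to `Wᵢ ⊕ Wᵢ'`, every basis tensor with some factor in
`Wᵢ` is in the sum, and the coefficient of every other one is such a pairing. Finally `Wᵢ ↦ Wᵢ^⊥`
is a bijection with `codim Wᵢ^⊥ = dim Wᵢ`.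
-/

open Module PiTensorProduct

section Dual

variable {K V : Type*} [Field K] [AddCommGroup V] [Module K V]

theorem Subspace.finrank_quotient_dualAnnihilator (W : Subspace K V) :
    finrank K (Dual K V ⧸ W.dualAnnihilator) = finrank K W :=
  W.quotAnnihilatorEquiv.finrank_eq.trans Subspace.dual_finrank_eq

theorem Subspace.exists_basis_adapted [FiniteDimensional K V] (W : Subspace K V) :
    ∃ (n m : ℕ) (b : Basis (Fin n ⊕ Fin m) K V),
      (∀ k, b (.inl k) ∈ W) ∧ ∀ j, b.coord (.inr j) ∈ W.dualAnnihilator := by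
  obtain ⟨W', hW'⟩ := W.exists_isCompl
  let e := Submodule.prodEquivOfIsCompl W W' hW'
  refine ⟨_, _, ((finBasis K W).prod (finBasis K W')).map e, fun k => ?_, fun j => ?_⟩
  · simp [e, Basis.prod_apply]
  · rw [Submodule.mem_dualAnnihilator]
    intro x hx
    simp [e, Basis.prod_repr_inr, Submodule.projectionOnto_apply_of_mem_right hW'.symm hx]

end Dual

theorem exists_submodules_sum_finrank_le_card {R ι κ : Type*} [Ring R] [StrongRankCondition R]
    [Fintype ι] [Fintype κ] {M : ι → Type*} [∀ i, AddCommGroup (M i)] [∀ i, Module R (M i)]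
    (p : κ → Σ i, M i) :
    ∃ W : ∀ i, Submodule R (M i), ∑ i, finrank R (W i) ≤ Fintype.card κ ∧
      ∀ j, (p j).2 ∈ W (p j).1 := by
  classical
  let P := Finset.univ.image p
  let fiber : ∀ i, Finset (M i) := fun i => P.preimage (Sigma.mk i) sigma_mk_injective.injOn
  refine ⟨fun i => Submodule.span R (fiber i), ?_, fun j => Submodule.subset_span ?_⟩
  · calc ∑ i, finrank R (Submodule.span R (fiber i : Set (M i)))
        ≤ ∑ i, (fiber i).card := Finset.sum_le_sum fun i _ => finrank_span_finset_le_card _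
      _ = P.card := by
          rw [← Finset.card_sigma, Finset.sigma_preimage_mk_of_subset P (Finset.subset_univ _)]
      _ ≤ Fintype.card κ := Finset.card_image_le
  · simp [fiber, P]

section Slices

variable {F : Type*} [Field F] {d : ℕ} {V : Fin d → Type*}
  [∀ i, AddCommGroup (V i)] [∀ i, Module F (V i)]

noncomputable def sliceSpan (i : Fin d) (u : V i) : Submodule F (⨂[F] k, V k) :=
  Submodule.span F {t | ∃ v : ∀ k, V k, v i = u ∧ t = tprod F v}

noncomputable def sliceSubmodule (i : Fin d) (W : Submodule F (V i)) :
    Submodule F (⨂[F] k, V k) :=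
  Submodule.span F (tprod F '' {v | v i ∈ W})

def HasSliceDecomposition (T : ⨂[F] i, V i) (r : ℕ) : Prop :=
  ∃ S : Fin r → ⨂[F] i, V i, (∀ j, ∃ i, ∃ u : V i, S j ∈ sliceSpan i u) ∧ T = ∑ j, S j

theorem tensorSliceRank_eq_sInf (T : ⨂[F] i, V i) :
    tensorSliceRank F V T = sInf {r | HasSliceDecomposition T r} :=
  rfl

theorem sliceSpan_le_sliceSubmodule {i : Fin d} {u : V i} {W : Submodule F (V i)} (hu : u ∈ W) :
    sliceSpan i u ≤ sliceSubmodule i W :=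
  Submodule.span_mono <| by
    rintro _ ⟨v, rfl, rfl⟩
    exact ⟨v, hu, rfl⟩

theorem sliceSubmodule_top (i : Fin d) : sliceSubmodule i (⊤ : Submodule F (V i)) = ⊤ := by
  simpa [sliceSubmodule, Set.image_univ] using span_tprod_eq_top (R := F) (s := V)

theorem sliceSubmodule_span_le_iSup_sliceSpan {κ : Type*} [Fintype κ] (i : Fin d) (c : κ → V i) :
    sliceSubmodule i (Submodule.span F (Set.range c)) ≤ ⨆ k, sliceSpan i (c k) := by
  classical
  refine Submodule.span_le.2 ?_
  rintro _ ⟨v, hv, rfl⟩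
  obtain ⟨a, ha⟩ := (Submodule.mem_span_range_iff_exists_fun F).1 hv
  have hexpand : tprod F v = ∑ k, a k • tprod F (Function.update v i (c k)) := by
    conv_lhs => rw [← Function.update_eq_self i v, ← ha]
    simp only [MultilinearMap.map_update_sum, MultilinearMap.map_update_smul]
  rw [SetLike.mem_coe, hexpand]
  exact Submodule.sum_mem _ fun k _ => Submodule.smul_mem _ _ <|
    Submodule.mem_iSup_of_mem k <| Submodule.subset_span ⟨_, Function.update_self .., rfl⟩

theorem hasSliceDecomposition_of_mem_iSup_sliceSpan {ι : Type*} [Fintype ι] {T : ⨂[F] i, V i}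
    {i : ι → Fin d} {u : ∀ p, V (i p)} (hT : T ∈ ⨆ p, sliceSpan (i p) (u p)) :
    HasSliceDecomposition T (Fintype.card ι) := by
  obtain ⟨S, rfl⟩ :=
    (Submodule.mem_iSup_finset_iff_exists_sum (s := Finset.univ) _ T).1 (by simpa using hT)
  let e := Fintype.equivFin ι
  exact ⟨fun j => S (e.symm j), fun j => ⟨_, _, (S (e.symm j)).2⟩,
    (e.symm.sum_comp fun p => (S p : ⨂[F] i, V i)).symm⟩

theorem hasSliceDecomposition_of_mem_iSup_sliceSubmodule [∀ i, FiniteDimensional F (V i)]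
    {T : ⨂[F] i, V i} {W : ∀ i, Submodule F (V i)} (hT : T ∈ ⨆ i, sliceSubmodule i (W i)) :
    HasSliceDecomposition T (∑ i, finrank F (W i)) := by
  let c : ∀ i, Fin (finrank F (W i)) → V i := fun i => (W i).subtype ∘ finBasis F (W i)
  have hW : ∀ i, W i = Submodule.span F (Set.range (c i)) := fun i => by
    rw [Set.range_comp, Submodule.span_image, Basis.span_eq, Submodule.map_subtype_top]
  have hT' : T ∈ ⨆ p : Σ i, Fin (finrank F (W i)), sliceSpan p.1 (c p.1 p.2) := by
    refine SetLike.le_def.1 (iSup_le fun i => ?_) hT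
    calc sliceSubmodule i (W i) = sliceSubmodule i (Submodule.span F (Set.range (c i))) :=
          congrArg (sliceSubmodule i) (hW i)
      _ ≤ ⨆ k, sliceSpan i (c i k) := sliceSubmodule_span_le_iSup_sliceSpan i (c i)
      _ ≤ ⨆ p : Σ i, Fin (finrank F (W i)), sliceSpan p.1 (c p.1 p.2) :=
          iSup_le fun k => le_iSup_of_le (⟨i, k⟩ : Σ i, Fin (finrank F (W i))) le_rfl
  simpa using hasSliceDecomposition_of_mem_iSup_sliceSpan hT'

theorem HasSliceDecomposition.exists_submodules {T : ⨂[F] i, V i} {r : ℕ}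
    (hT : HasSliceDecomposition T r) :
    ∃ W : ∀ i, Submodule F (V i), ∑ i, finrank F (W i) ≤ r ∧
      T ∈ ⨆ i, sliceSubmodule i (W i) := by
  obtain ⟨S, hS, rfl⟩ := hT
  choose i u hu using hS
  obtain ⟨W, hWr, hWu⟩ :=
    exists_submodules_sum_finrank_le_card (R := F) fun j => (⟨i j, u j⟩ : Σ k, V k)
  refine ⟨W, by simpa using hWr, Submodule.sum_mem _ fun j _ => ?_⟩
  exact Submodule.mem_iSup_of_mem (i j) (sliceSpan_le_sliceSubmodule (hWu j) (hu j))

theorem tensorSliceRank_le_iff_exists_submodules [∀ i, FiniteDimensional F (V i)] (hd : 0 < d)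
    (T : ⨂[F] i, V i) (r : ℕ) :
    tensorSliceRank F V T ≤ r ↔
      ∃ W : ∀ i, Submodule F (V i), ∑ i, finrank F (W i) ≤ r ∧
        T ∈ ⨆ i, sliceSubmodule i (W i) := by
  rw [tensorSliceRank_eq_sInf]
  constructor
  · intro h
    have hT : T ∈ ⨆ i, sliceSubmodule i (⊤ : Submodule F (V i)) :=
      Submodule.mem_iSup_of_mem ⟨0, hd⟩ (by simp [sliceSubmodule_top])
    obtain ⟨W, hWr, hWT⟩ := HasSliceDecomposition.exists_submodules <|
      Nat.sInf_mem (s := {r | HasSliceDecomposition T r})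
        ⟨_, hasSliceDecomposition_of_mem_iSup_sliceSubmodule hT⟩
    exact ⟨W, hWr.trans h, hWT⟩
  · rintro ⟨W, hWr, hWT⟩
    exact (Nat.sInf_le (hasSliceDecomposition_of_mem_iSup_sliceSubmodule hWT)).trans hWr

@[simp]
theorem tensorPairing_tprod (f : ∀ i, Dual F (V i)) (v : ∀ i, V i) :
    tensorPairing F V f (tprod F v) = ∏ i, f i (v i) := by
  simp [tensorPairing]

theorem tensorPairing_coord {κ : Fin d → Type*} [∀ i, Fintype (κ i)]
    (b : ∀ i, Basis (κ i) F (V i)) (p : ∀ i, κ i) :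
    tensorPairing F V (fun i => (b i).coord (p i)) = (Basis.piTensorProduct b).coord p := by
  refine PiTensorProduct.ext <| MultilinearMap.ext fun v => ?_
  simp [Basis.piTensorProduct_repr_tprod_apply]

theorem sliceSubmodule_le_ker_tensorPairing {f : ∀ i, Dual F (V i)} {i : Fin d}
    {W : Submodule F (V i)} (hf : f i ∈ W.dualAnnihilator) :
    sliceSubmodule i W ≤ LinearMap.ker (tensorPairing F V f) := by
  refine Submodule.span_le.2 ?_
  rintro _ ⟨v, hv, rfl⟩
  simpa using Finset.prod_eq_zero (Finset.mem_univ i) ((Submodule.mem_dualAnnihilator _).1 hf _ hv)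

theorem mem_iSup_sliceSubmodule_iff [∀ i, FiniteDimensional F (V i)] {T : ⨂[F] i, V i}
    {W : ∀ i, Submodule F (V i)} :
    T ∈ ⨆ i, sliceSubmodule i (W i) ↔
      ∀ f : ∀ i, Dual F (V i), (∀ i, f i ∈ (W i).dualAnnihilator) → tensorPairing F V f T = 0 := by
  refine ⟨fun hT f hf => iSup_le (fun i => sliceSubmodule_le_ker_tensorPairing (hf i)) hT,
    fun hT => ?_⟩
  choose n m b hbW hbcoord using fun i => Subspace.exists_basis_adapted (W i)
  let B := Basis.piTensorProduct b
  rw [← B.sum_repr T]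
  refine Submodule.sum_mem _ fun α _ => ?_
  by_cases hα : ∃ i k, α i = .inl k
  · obtain ⟨i, k, hik⟩ := hα
    refine Submodule.smul_mem _ _ (Submodule.mem_iSup_of_mem i (Submodule.subset_span ?_))
    exact ⟨fun i => b i (α i), by simpa [hik] using hbW i k, (Basis.piTensorProduct_apply b α).symm⟩
  · have hαcoord : ∀ i, (b i).coord (α i) ∈ (W i).dualAnnihilator := fun i => by
      rcases h : α i with k | j
      · exact absurd ⟨i, k, h⟩ hα
      · exact hbcoord i j
    have hcoeff : B.repr T α = 0 := by
      simpa [← Basis.coord_apply, B, ← tensorPairing_coord] using hT _ hαcoord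
    simp [hcoeff]

end Slices

theorem slice_rank_le_iff_dual (F : Type*) [Field F] {d : ℕ} (hd : 2 ≤ d)
    (V : Fin d → Type*)
    [∀ i, AddCommGroup (V i)] [∀ i, Module F (V i)] [∀ i, FiniteDimensional F (V i)]
    (T : ⨂[F] i, V i) (r : ℕ) :
    tensorSliceRank F V T ≤ r ↔
      ∃ U : ∀ i, Submodule F (Module.Dual F (V i)),
        (∑ i, Module.finrank F (Module.Dual F (V i) ⧸ U i)) ≤ r ∧
        ∀ f : ∀ i, Module.Dual F (V i), (∀ i, f i ∈ U i) → tensorPairing F V f T = 0 := by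
  rw [tensorSliceRank_le_iff_exists_submodules (by omega)]
  constructor
  · rintro ⟨W, hWr, hWT⟩
    refine ⟨fun i => (W i).dualAnnihilator, ?_, mem_iSup_sliceSubmodule_iff.1 hWT⟩
    simpa only [Subspace.finrank_quotient_dualAnnihilator] using hWr
  · rintro ⟨U, hUr, hUT⟩
    have hU : ∀ i, (U i).dualCoannihilator.dualAnnihilator = U i := fun i =>
      Subspace.dualCoannihilator_dualAnnihilator_eq
    refine ⟨fun i => (U i).dualCoannihilator, ?_, mem_iSup_sliceSubmodule_iff.2 ?_⟩
    · calc ∑ i, finrank F (U i).dualCoannihilator = ∑ i, finrank F (Dual F (V i) ⧸ U i) :=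
            Finset.sum_congr rfl fun i _ => by rw [← Subspace.finrank_quotient_dualAnnihilator, hU]
        _ ≤ r := hUr
    · simpa only [hU] using hUT
end

section
/- Let $T: X^d \to \mathbb{F}$ be a $d$-tensor over a field $\mathbb{F}$ on a finite set $X$, with $d \geq 2$, such that $T(x_1,\dots,x_d) = 0$ unless $x_1 = x_2 = \cdots = x_d$. Then the slice rank of $T$ equals the number of $x \in X$ with $T(x,\dots,x) \neq 0$. -/
/-!
For the upper bound, slice `T` along one coordinate, one slice per point of the support of its
diagonal. The lower bound goes by induction on the order. For order 2, a decomposition into `r`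
slices factors the diagonal matrix of `T` through `F ^ r`. For higher order, let `I` be the slices
along the first coordinate, and take `f : X → F` orthogonal to their coefficient functions, with
support of size at least `|X| - |I|` (a subspace of `F ^ X` of dimension `m` contains a vector
with `m` nonzero coordinates). Contracting the first coordinate of `T` against `f` kills the
slices in `I` and leaves a diagonal tensor of one order less, with diagonal `f · diag T`,
decomposed into the remaining slices.
-/

open scoped BigOperators

/-- A tensor `T : (∀ i, X i) → F` has slice rank at most one: it factors as
`T x = u (x i) * v x` with `v` not depending on the `i`-th coordinate. -/
def IsSliceOne {F : Type*} [Field F] {d : ℕ} {X : Fin d → Type*}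
    (T : (∀ i, X i) → F) : Prop :=
  ∃ (i : Fin d) (u : X i → F) (v : (∀ i, X i) → F),
    (∀ x y : ∀ i, X i, (∀ j, j ≠ i → x j = y j) → v x = v y) ∧
    ∀ x, T x = u (x i) * v x

/-- Slice rank of a function tensor: least number of slice-rank-one summands. -/
noncomputable def sliceRank {F : Type*} [Field F] {d : ℕ} {X : Fin d → Type*}
    (T : (∀ i, X i) → F) : ℕ :=
  sInf {r | ∃ S : Fin r → ((∀ i, X i) → F),
    (∀ k, IsSliceOne (S k)) ∧ ∀ x, T x = ∑ k, S k x}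

open Function Module

section SliceDecomposition

variable {F : Type*} [Field F] {d : ℕ} {X : Fin d → Type*}

def IsSliceDecomposition (T : (∀ i, X i) → F) {κ : Type*} [Fintype κ]
    (S : κ → (∀ i, X i) → F) : Prop :=
  (∀ k, IsSliceOne (S k)) ∧ ∀ x, T x = ∑ k, S k x

theorem IsSliceDecomposition.comp_equiv {T : (∀ i, X i) → F} {κ κ' : Type*} [Fintype κ]
    [Fintype κ'] {S : κ → (∀ i, X i) → F} (hS : IsSliceDecomposition T S) (e : κ' ≃ κ) :
    IsSliceDecomposition T (S ∘ e) :=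
  ⟨fun k => hS.1 (e k), fun x => (hS.2 x).trans (e.sum_comp (S · x)).symm⟩

theorem sliceRank_eq_card {T : (∀ i, X i) → F} {κ : Type*} [Fintype κ]
    {S : κ → (∀ i, X i) → F} (hS : IsSliceDecomposition T S)
    (hmin : ∀ r (S' : Fin r → (∀ i, X i) → F), IsSliceDecomposition T S' →
      Fintype.card κ ≤ r) :
    sliceRank T = Fintype.card κ :=
  IsLeast.csInf_eq
    ⟨⟨_, hS.comp_equiv (Fintype.equivFin κ).symm⟩, fun r ⟨S', hS'⟩ => hmin r S' hS'⟩

end SliceDecomposition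

theorem Function.ncard_support_eq_card_subtype {Y M : Type*} [Zero M] [Fintype Y] (g : Y → M)
    [Fintype {y // g y ≠ 0}] : (support g).ncard = Fintype.card {y // g y ≠ 0} :=
  (Nat.card_coe_set_eq _).symm.trans (Nat.card_eq_fintype_card (α := {y // g y ≠ 0}))

theorem Submodule.exists_finrank_le_ncard_support {K Y : Type*} [Field K] [Fintype Y]
    (V : Submodule K (Y → K)) : ∃ f ∈ V, finrank K V ≤ (support f).ncard := by
  classical
  obtain ⟨_, ⟨f, hf, rfl⟩, hmax⟩ := Set.exists_max_image (support '' (V : Set (Y → K)))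
    Set.ncard (Set.toFinite _) ⟨_, 0, V.zero_mem, rfl⟩
  refine ⟨f, hf, ?_⟩
  -- by maximality of `support f`, no nonzero `g ∈ V` vanishes on it
  let restrict : V →ₗ[K] (support f → K) := (LinearMap.funLeft K K Subtype.val).comp V.subtype
  have hinj : Injective restrict := by
    refine (injective_iff_map_eq_zero _).mpr fun ⟨g, hg⟩ hg0 => ?_
    have hgf : ∀ y ∈ support f, g y = 0 := fun y hy => congrFun hg0 ⟨y, hy⟩
    by_contra hne
    obtain ⟨a, ha⟩ : ∃ a, g a ≠ 0 := by
      by_contra! h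
      exact hne (Subtype.ext (funext h))
    have hsub : support f ⊂ support (f + g) := by
      refine (Set.ssubset_iff_of_subset fun y hy => ?_).mpr ⟨a, ?_, fun haf => ha (hgf a haf)⟩
      · simpa [hgf y hy] using hy
      · have : f a = 0 := by_contra fun hfa => ha (hgf a hfa)
        simpa [this] using ha
    exact (Set.ncard_lt_ncard hsub).not_ge (hmax _ ⟨f + g, V.add_mem hf hg, rfl⟩)
  calc finrank K V ≤ finrank K (support f → K) := LinearMap.finrank_le_finrank_of_injective hinj
    _ = (support f).ncard := by
      rw [finrank_fintype_fun_eq_card, ← Nat.card_eq_fintype_card, Nat.card_coe_set_eq]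

theorem exists_forall_dotProduct_eq_zero_card_le {K Y κ : Type*} [Field K] [Fintype Y]
    [Fintype κ] (u : κ → Y → K) :
    ∃ f : Y → K, (∀ k, u k ⬝ᵥ f = 0) ∧
      Fintype.card Y ≤ (support f).ncard + Fintype.card κ := by
  let M : Matrix κ Y K := Matrix.of u
  obtain ⟨f, hf, hcard⟩ := (LinearMap.ker M.mulVecLin).exists_finrank_le_ncard_support
  refine ⟨f, fun k => congrFun (LinearMap.mem_ker.mp hf) k, ?_⟩
  have hrank := M.mulVecLin.finrank_range_add_finrank_ker
  rw [finrank_fintype_fun_eq_card] at hrank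
  have := M.rank_le_card_height
  unfold Matrix.rank at this
  omega

section Diagonal

variable {F : Type*} {d : ℕ} {X : Type*}

def IsDiagonal [Zero F] (T : (Fin d → X) → F) : Prop :=
  ∀ x : Fin d → X, (¬ ∀ i j, x i = x j) → T x = 0

def tensorDiag (T : (Fin d → X) → F) (a : X) : F :=
  T fun _ => a

theorem IsDiagonal.exists_isSliceDecomposition [Field F] [DecidableEq F] [Fintype X]
    {T : (Fin d → X) → F} (hT : IsDiagonal T) (i : Fin d) :
    ∃ S : {a // tensorDiag T a ≠ 0} → (Fin d → X) → F, IsSliceDecomposition T S := by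
  classical
  refine ⟨fun a x => (if x i = a then 1 else 0) * T (update x i a), fun a => ?_,
    fun x => ?_⟩
  · refine ⟨i, fun t => if t = a then 1 else 0, fun x => T (update x i a),
      fun x y hxy => ?_, fun x => rfl⟩
    simp only
    congr 1
    ext j
    rcases eq_or_ne j i with rfl | hj
    · simp
    · simp [hj, hxy j hj]
  · have hterm : ∀ a : {a // tensorDiag T a ≠ 0},
        (if x i = a then 1 else 0) * T (update x i a) = if x i = a then T x else 0 := by
      rintro ⟨a, -⟩
      split_ifs with h
      · rw [← h, update_eq_self, one_mul]
      · rw [zero_mul]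
    simp only [hterm]
    by_cases hx : T x = 0
    · simp [hx]
    have hconst : x = fun _ => x i := funext fun j => not_not.mp (mt (hT x) hx) j i
    have hdiag : tensorDiag T (x i) ≠ 0 := by rwa [tensorDiag, ← hconst]
    rw [Fintype.sum_eq_single ⟨x i, hdiag⟩ fun a ha => if_neg fun h => ha (Subtype.ext h.symm)]
    exact (if_pos rfl).symm

theorem IsDiagonal.apply_vecCons [Zero F] [DecidableEq X] {T : (Fin 2 → X) → F}
    (hT : IsDiagonal T) (a b : X) : T ![a, b] = Matrix.diagonal (tensorDiag T) a b := by
  rw [Matrix.diagonal_apply]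
  split_ifs with hab
  · subst hab
    congr 1
    ext j
    fin_cases j <;> rfl
  · exact hT _ fun h => hab (h 0 1)

theorem IsSliceOne.exists_apply_vecCons_eq_mul [Field F] {S : (Fin 2 → X) → F}
    (hS : IsSliceOne S) : ∃ α β : X → F, ∀ a b, S ![a, b] = α a * β b := by
  obtain ⟨i, u, v, hv, huv⟩ := hS
  fin_cases i
  · refine ⟨u, fun b => v ![b, b], fun a b => ?_⟩
    rw [huv, hv ![a, b] ![b, b] fun j hj => by fin_cases j <;> simp_all]
    rfl
  · refine ⟨fun a => v ![a, a], u, fun a b => ?_⟩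
    rw [huv, mul_comm, hv ![a, b] ![a, a] fun j hj => by fin_cases j <;> simp_all]
    rfl

theorem IsDiagonal.ncard_support_le_of_two [Field F] [Fintype X] {T : (Fin 2 → X) → F}
    (hT : IsDiagonal T) {κ : Type*} [Fintype κ] {S : κ → (Fin 2 → X) → F}
    (hS : IsSliceDecomposition T S) :
    (support (tensorDiag T)).ncard ≤ Fintype.card κ := by
  classical
  choose α β hαβ using fun k => (hS.1 k).exists_apply_vecCons_eq_mul
  have hfactor : Matrix.diagonal (tensorDiag T) =
      Matrix.of (fun a k => α k a) * Matrix.of (fun k b => β k b) := by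
    ext a b
    simp only [Matrix.mul_apply, Matrix.of_apply, ← hT.apply_vecCons, hS.2, hαβ]
  calc (support (tensorDiag T)).ncard
      = Fintype.card {a // tensorDiag T a ≠ 0} := ncard_support_eq_card_subtype _
    _ = (Matrix.diagonal (tensorDiag T)).rank := (Matrix.rank_diagonal _).symm
    _ ≤ (Matrix.of (fun a k => α k a)).rank := by rw [hfactor]; exact Matrix.rank_mul_le_left _ _
    _ ≤ Fintype.card κ := Matrix.rank_le_card_width _

end Diagonal

section Contraction

variable {F : Type*} [Field F] {X : Type*} [Fintype X] {n : ℕ}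

def contractFirst (f : X → F) (T : (Fin (n + 1) → X) → F) (y : Fin n → X) : F :=
  ∑ a, f a * T (Fin.cons a y)

theorem isDiagonal_contractFirst {T : (Fin (n + 1) → X) → F} (hT : IsDiagonal T) (f : X → F) :
    IsDiagonal (contractFirst f T) := fun y hy =>
  Finset.sum_eq_zero fun a _ => by
    rw [hT _ fun h => hy fun i j => by simpa using h i.succ j.succ, mul_zero]

theorem IsDiagonal.tensorDiag_contractFirst {T : (Fin (n + 2) → X) → F} (hT : IsDiagonal T)
    (f : X → F) : tensorDiag (contractFirst f T) = fun a => f a * tensorDiag T a := by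
  ext a
  refine (Fintype.sum_eq_single a fun b hb => ?_).trans ?_
  · rw [hT _ fun h => hb (by simpa using h 0 1), mul_zero]
  · congr 2
    ext j
    cases j using Fin.cases <;> rfl

theorem contractFirst_eq_zero {S : (Fin (n + 1) → X) → F} {i : Fin (n + 1)} {u : X → F}
    {v : (Fin (n + 1) → X) → F} (hi : i = 0)
    (hv : ∀ x y : Fin (n + 1) → X, (∀ j, j ≠ i → x j = y j) → v x = v y)
    (huv : ∀ x, S x = u (x i) * v x) {f : X → F} (hf : u ⬝ᵥ f = 0) :
    contractFirst f S = 0 := by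
  subst hi
  ext y
  show contractFirst f S y = 0
  rcases isEmpty_or_nonempty X with hX | ⟨⟨a₀⟩⟩
  · exact Fintype.sum_empty _
  have hconst : ∀ a, v (Fin.cons a y) = v (Fin.cons a₀ y) := fun a => hv _ _ fun j hj => by
    obtain ⟨j, rfl⟩ := Fin.exists_succ_eq.mpr hj
    simp
  calc contractFirst f S y = ∑ a, u a * f a * v (Fin.cons a₀ y) := by
        simp only [contractFirst, huv, hconst, Fin.cons_zero]
        exact Finset.sum_congr rfl fun a _ => by ring
    _ = 0 := by rw [← Finset.sum_mul, ← dotProduct, hf, zero_mul]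

theorem isSliceOne_contractFirst {S : (Fin (n + 1) → X) → F} {i : Fin (n + 1)} {u : X → F}
    {v : (Fin (n + 1) → X) → F} (hi : i ≠ 0)
    (hv : ∀ x y : Fin (n + 1) → X, (∀ j, j ≠ i → x j = y j) → v x = v y)
    (huv : ∀ x, S x = u (x i) * v x) (f : X → F) : IsSliceOne (contractFirst f S) := by
  obtain ⟨i, rfl⟩ := Fin.exists_succ_eq.mpr hi
  refine ⟨i, u, fun y => ∑ a, f a * v (Fin.cons a y), fun x y hxy => ?_, fun y => ?_⟩
  · refine Finset.sum_congr rfl fun a _ => congrArg _ (hv _ _ fun j hj => ?_)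
    cases j using Fin.cases with
    | zero => rfl
    | succ j => simpa using hxy j (ne_of_apply_ne Fin.succ hj)
  · simp only [contractFirst, huv, Fin.cons_succ, Finset.mul_sum]
    exact Finset.sum_congr rfl fun a _ => by ring

end Contraction

theorem IsDiagonal.ncard_support_le {F : Type*} [Field F] {X : Type*} [Fintype X] {n : ℕ}
    {T : (Fin (n + 2) → X) → F} (hT : IsDiagonal T) {κ : Type*} [Fintype κ]
    {S : κ → (Fin (n + 2) → X) → F} (hS : IsSliceDecomposition T S) :
    (support (tensorDiag T)).ncard ≤ Fintype.card κ := by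
  induction n generalizing κ with
  | zero => exact hT.ncard_support_le_of_two hS
  | succ n ih =>
    classical
    obtain ⟨hslice, hsum⟩ := hS
    choose i u v hv huv using hslice
    obtain ⟨f, hf, hcard⟩ :=
      exists_forall_dotProduct_eq_zero_card_le fun k : {k // i k = 0} => u k
    have hdecomp : IsSliceDecomposition (contractFirst f T)
        fun k : {k // i k ≠ 0} => contractFirst f (S k) := by
      refine ⟨fun k => isSliceOne_contractFirst k.2 (hv k) (huv k) f, fun y => ?_⟩
      have hzero : ∀ k : {k // i k = 0}, contractFirst f (S k) y = 0 := fun k =>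
        congrFun (contractFirst_eq_zero k.2 (hv k) (huv k) (hf k)) y
      calc contractFirst f T y = ∑ k, contractFirst f (S k) y := by
            simp only [contractFirst, hsum, Finset.mul_sum]
            exact Finset.sum_comm
        _ = _ := by
            rw [← Fintype.sum_subtype_add_sum_subtype (fun k => i k = 0),
              Fintype.sum_eq_zero _ hzero, zero_add]
    have hrest := ih (isDiagonal_contractFirst hT f) hdecomp
    rw [hT.tensorDiag_contractFirst, support_mul] at hrest
    have hunion := Set.ncard_inter_add_ncard_union (support f) (support (tensorDiag T))
    have hX : (support f ∪ support (tensorDiag T)).ncard ≤ Fintype.card X :=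
      (Set.ncard_le_card _).trans_eq Nat.card_eq_fintype_card
    have hκ : Fintype.card {k // i k ≠ 0} = Fintype.card κ - Fintype.card {k // i k = 0} :=
      Fintype.card_subtype_compl _
    have := Fintype.card_subtype_le fun k => i k = 0
    omega

theorem sliceRank_diagonal {F : Type*} [Field F] {d : ℕ} (hd : 2 ≤ d)
    (X : Type*) [Fintype X] (T : (Fin d → X) → F)
    (hdiag : ∀ x : Fin d → X, (¬ ∀ i j, x i = x j) → T x = 0) :
    sliceRank T = Set.ncard {a : X | T (fun _ => a) ≠ 0} := by
  classical
  obtain ⟨n, rfl⟩ : ∃ n, d = n + 2 := ⟨d - 2, by omega⟩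
  have hT : IsDiagonal T := hdiag
  obtain ⟨S, hS⟩ := hT.exists_isSliceDecomposition 0
  have hcard := ncard_support_eq_card_subtype (tensorDiag T)
  rw [sliceRank_eq_card hS fun r S' hS' => ?_, ← hcard]
  · rfl
  · simpa [← hcard] using hT.ncard_support_le hS'
end

section
/- Let $T: X^3 \to \mathbb{F}$ be the tensor formed by the direct sum of $m$ copies of the Levi-Civita tensor $\epsilon$ on $\{1,2,3\}^3$ over a field $\mathbb{F}$ of characteristic not 2 (so $|X| = 3m$). Then the slice rank of $T$ equals $3m$. -/
/-
Slicing along the first coordinate gives `3m` slices, one per index. Conversely, a decomposition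
into `r` slices, `rᵢ` of which are slices in direction `i`, yields subspaces `Vᵢ` of codimension at
most `rᵢ` on which the trilinear form `T(f, g, h) = ∑ T(x) f(x₀) g(x₁) h(x₂)` vanishes. For the
Levi-Civita sum, `T(f, g, h) = f ⬝ (g × h)` with the cross product taken blockwise, so `V₀` is
orthogonal to the span `C` of `V₁ × V₂`, while `dim V₁ + dim V₂ ≤ 3m + dim C`. The latter follows
block by block from the same bound for a single cross product on `F³`, where crossing with a fixed
nonzero vector has a one-dimensional kernel and `F³ × F³` spans `F³`. Hence
`9m - r ≤ dim V₀ + dim V₁ + dim V₂ ≤ 6m`.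
-/
open scoped BigOperators

/-- The Levi-Civita tensor on `{1,2,3}³` (indices `Fin 3`): the sign of the permutation
`(x,y,z)` of `(0,1,2)` when the entries are distinct, and `0` otherwise. -/
def leviCivita {F : Type*} [Field F] (x y z : Fin 3) : F :=
  if (x, y, z) = (0, 1, 2) ∨ (x, y, z) = (1, 2, 0) ∨ (x, y, z) = (2, 0, 1) then 1
  else if (x, y, z) = (2, 1, 0) ∨ (x, y, z) = (1, 0, 2) ∨ (x, y, z) = (0, 2, 1) then -1
  else 0

/-- The direct sum of `m` copies of the Levi-Civita tensor, on index set `Fin 3 × Fin m`: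
`m` diagonal `3 × 3 × 3` blocks, each a copy of `ε`, and zero elsewhere. -/
def leviCivitaSum {F : Type*} [Field F] (m : ℕ) (x y z : Fin 3 × Fin m) : F :=
  if x.2 = y.2 ∧ y.2 = z.2 then leviCivita x.1 y.1 z.1 else 0

open Matrix Module Submodule

section

variable {F : Type*} [Field F]

section SliceRank

variable {d : ℕ} {X : Fin d → Type*} [∀ i, Fintype (X i)]

def tensorContract (T : (∀ i, X i) → F) (f : ∀ i, X i → F) : F :=
  ∑ x, T x * ∏ i, f i (x i)

theorem tensorContract_sum {r : ℕ} (S : Fin r → (∀ i, X i) → F) (f : ∀ i, X i → F) :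
    tensorContract (fun x => ∑ k, S k x) f = ∑ k, tensorContract (S k) f := by
  simp only [tensorContract, Finset.sum_mul]
  exact Finset.sum_comm

theorem tensorContract_slice_eq_zero {i : Fin d} {u : X i → F} {v : (∀ i, X i) → F}
    (hv : ∀ x y : ∀ i, X i, (∀ j, j ≠ i → x j = y j) → v x = v y) {f : ∀ i, X i → F}
    (hf : u ⬝ᵥ f i = 0) : tensorContract (fun x => u (x i) * v x) f = 0 := by
  obtain ⟨n, rfl⟩ : ∃ n, d = n + 1 := ⟨d - 1, by have := i.pos; omega⟩
  unfold tensorContract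
  rw [← (Fin.insertNthEquiv X i).sum_comp, Fintype.sum_prod_type, Finset.sum_comm]
  refine Finset.sum_eq_zero fun r _ => ?_
  rcases isEmpty_or_nonempty (X i) with _ | ⟨⟨a₀⟩⟩
  · exact Finset.sum_of_isEmpty _
  have hva : ∀ a, v (Fin.insertNth i a r) = v (Fin.insertNth i a₀ r) := fun a =>
    hv _ _ fun j hj => by
      obtain ⟨k, rfl⟩ := Fin.exists_succAbove_eq hj
      simp only [Fin.insertNth_apply_succAbove]
  calc ∑ a, u (Fin.insertNth i a r i) * v (Fin.insertNth i a r) *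
        ∏ j, f j (Fin.insertNth i a r j)
      = ∑ a, u a * f i a * (v (Fin.insertNth i a₀ r) * ∏ k, f (i.succAbove k) (r k)) := by
        refine Finset.sum_congr rfl fun a _ => ?_
        simp only [Fin.prod_univ_succAbove _ i, Fin.insertNth_apply_same,
          Fin.insertNth_apply_succAbove, hva a]
        ring
    _ = 0 := by rw [← Finset.sum_mul, ← dotProduct, hf, zero_mul]

theorem exists_subspaces_tensorContract_eq_zero {r : ℕ} (S : Fin r → (∀ i, X i) → F)
    (hS : ∀ k, IsSliceOne (S k)) :
    ∃ V : ∀ i, Submodule F (X i → F), ∑ i, Fintype.card (X i) ≤ r + ∑ i, finrank F (V i) ∧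
      ∀ f : ∀ i, X i → F, (∀ i, f i ∈ V i) → tensorContract (fun x => ∑ k, S k x) f = 0 := by
  choose dir u v hv hS using hS
  -- `A i` stacks the vectors `u k` of the slices `k` in direction `i`
  let A : ∀ i, Matrix {k // dir k = i} (X i) F := fun i k => k.2 ▸ u k.1
  refine ⟨fun i => LinearMap.ker (A i).mulVecLin, ?_, fun f hf => ?_⟩
  · have hcodim : ∀ i, Fintype.card (X i) ≤
        Fintype.card {k // dir k = i} + finrank F (LinearMap.ker (A i).mulVecLin) := fun i => by
      rw [← Module.finrank_fintype_fun_eq_card (R := F),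
        ← LinearMap.finrank_range_add_finrank_ker (A i).mulVecLin]
      exact Nat.add_le_add_right (rank_le_card_height (A i)) _
    calc ∑ i, Fintype.card (X i)
        ≤ ∑ i, (Fintype.card {k // dir k = i} + finrank F (LinearMap.ker (A i).mulVecLin)) :=
          Finset.sum_le_sum fun i _ => hcodim i
      _ = r + ∑ i, finrank F (LinearMap.ker (A i).mulVecLin) := by
          rw [Finset.sum_add_distrib, ← Fintype.card_sigma,
            Fintype.card_congr (Equiv.sigmaFiberEquiv dir), Fintype.card_fin]
  · rw [tensorContract_sum]
    refine Finset.sum_eq_zero fun k _ => ?_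
    rw [show S k = fun x => u k (x (dir k)) * v k x from funext (hS k)]
    exact tensorContract_slice_eq_zero (hv k) (congrFun (hf (dir k)) ⟨k, rfl⟩)

theorem exists_sliceOne_sum_eq [∀ i, DecidableEq (X i)] (T : (∀ i, X i) → F) (i : Fin d) :
    ∃ S : Fin (Fintype.card (X i)) → (∀ i, X i) → F,
      (∀ k, IsSliceOne (S k)) ∧ ∀ x, T x = ∑ k, S k x := by
  let e := (Fintype.equivFin (X i)).symm
  refine ⟨fun k x => (if x i = e k then 1 else 0) * T (Function.update x i (e k)),
    fun k => ⟨i, fun a => if a = e k then 1 else 0, fun x => T (Function.update x i (e k)),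
      fun x y hxy => ?_, fun x => rfl⟩, fun x => ?_⟩
  · refine congrArg T (funext fun j => ?_)
    rcases eq_or_ne j i with rfl | hj
    · simp only [Function.update_self]
    · simp only [Function.update_of_ne hj, hxy j hj]
  · rw [e.sum_comp (fun a => (if x i = a then 1 else 0) * T (Function.update x i a))]
    simp

theorem sliceRank_le_card [∀ i, DecidableEq (X i)] (T : (∀ i, X i) → F) (i : Fin d) :
    sliceRank T ≤ Fintype.card (X i) :=
  Nat.sInf_le (exists_sliceOne_sum_eq T i)

theorem le_sliceRank [NeZero d] [∀ i, DecidableEq (X i)] {T : (∀ i, X i) → F} {n : ℕ}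
    (h : ∀ r (S : Fin r → (∀ i, X i) → F), (∀ k, IsSliceOne (S k)) →
      (∀ x, T x = ∑ k, S k x) → n ≤ r) :
    n ≤ sliceRank T := by
  obtain ⟨S, hS, hT⟩ := Nat.sInf_mem (s := {r | ∃ S : Fin r → (∀ i, X i) → F,
    (∀ k, IsSliceOne (S k)) ∧ ∀ x, T x = ∑ k, S k x}) ⟨_, exists_sliceOne_sum_eq T 0⟩
  exact h _ S hS hT

end SliceRank

section Rank

variable {M N : Type*} [AddCommGroup M] [Module F M] [FiniteDimensional F M]
  [AddCommGroup N] [Module F N]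

theorem finrank_map_add_finrank_inf_ker (p : Submodule F M) (f : M →ₗ[F] N) :
    finrank F (p.map f) + finrank F (p ⊓ LinearMap.ker f : Submodule F M) = finrank F p := by
  rw [← LinearMap.range_domRestrict, ← LinearMap.finrank_range_add_finrank_ker (f.domRestrict p),
    LinearMap.ker_domRestrict, ← Submodule.finrank_map_subtype_eq p, Submodule.map_comap_subtype,
    inf_comm]

theorem finrank_le_finrank_map_add_one (p : Submodule F M) {f : M →ₗ[F] N} {w : M}
    (hf : LinearMap.ker f ≤ F ∙ w) :
    finrank F p ≤ finrank F (p.map f) + 1 := by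
  rw [← finrank_map_add_finrank_inf_ker p f]
  gcongr
  calc _ ≤ finrank F (F ∙ w) := Submodule.finrank_mono (inf_le_right.trans hf)
    _ ≤ 1 := (finrank_span_le_card {w}).trans (by simp)

theorem finrank_eq_finrank_map_add_finrank_map_inf_ker {P : Type*} [AddCommGroup P]
    [Module F P] {f : M →ₗ[F] N} {g : M →ₗ[F] P} (hfg : LinearMap.ker f ⊓ LinearMap.ker g = ⊥)
    (U : Submodule F M) :
    finrank F U = finrank F (U.map f) + finrank F ((U ⊓ LinearMap.ker f).map g) := by
  have hU : U ⊓ LinearMap.ker f ⊓ LinearMap.ker g = ⊥ :=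
    eq_bot_iff.2 (hfg ▸ inf_le_inf_right _ inf_le_right)
  rw [← finrank_map_add_finrank_inf_ker U f, ← finrank_map_add_finrank_inf_ker _ g, hU,
    finrank_bot, add_zero]

theorem finrank_add_finrank_le_card_of_dotProduct_eq_zero {α : Type*} [Fintype α] [DecidableEq α]
    {V U : Submodule F (α → F)} (h : ∀ f ∈ V, ∀ g ∈ U, f ⬝ᵥ g = 0) :
    finrank F V + finrank F U ≤ Fintype.card α := by
  have hU : U ≤ (Matrix.toBilin' (1 : Matrix α α F)).orthogonal V := fun g hg =>
    (LinearMap.BilinForm.mem_orthogonal_iff).2 fun f hf => by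
      simpa [Matrix.toBilin'_apply'] using h f hf g hg
  have hB := LinearMap.BilinForm.finrank_orthogonal
    (LinearMap.BilinForm.nondegenerate_toBilin'_of_det_ne_zero' (1 : Matrix α α F) (by simp)) V
  have hV := Submodule.finrank_le V
  rw [Module.finrank_fintype_fun_eq_card] at hB hV
  have := Submodule.finrank_mono hU
  omega

end Rank

section Cross

theorem ker_crossProduct_le {w : Fin 3 → F} (hw : w ≠ 0) :
    LinearMap.ker (crossProduct w) ≤ F ∙ w := fun x hx => by
  rw [LinearMap.mem_ker] at hx
  have hdep : ¬LinearIndependent F ![w, x] := by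
    rw [← crossProduct_ne_zero_iff_linearIndependent, not_not]; exact hx
  rw [LinearIndependent.pair_iff' hw] at hdep
  push Not at hdep
  exact mem_span_singleton.2 hdep

theorem ker_crossProduct_flip_le {w : Fin 3 → F} (hw : w ≠ 0) :
    LinearMap.ker ((crossProduct (R := F)).flip w) ≤ F ∙ w := fun x hx => by
  refine ker_crossProduct_le hw ?_
  rw [LinearMap.mem_ker, LinearMap.flip_apply] at hx
  rw [LinearMap.mem_ker, ← cross_anticomm, hx, neg_zero]

theorem map₂_crossProduct_top : map₂ (crossProduct (R := F)) ⊤ ⊤ = ⊤ := by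
  refine top_unique ((Pi.basisFun F (Fin 3)).span_eq.symm.trans_le (span_le.2 ?_))
  rintro _ ⟨i, rfl⟩
  obtain ⟨j, k, hjk⟩ : ∃ j k, Pi.basisFun F (Fin 3) i = Pi.single j 1 ⨯₃ Pi.single k 1 := by
    fin_cases i
    · exact ⟨1, 2, by ext a; fin_cases a <;> simp [cross_apply]⟩
    · exact ⟨2, 0, by ext a; fin_cases a <;> simp [cross_apply]⟩
    · exact ⟨0, 1, by ext a; fin_cases a <;> simp [cross_apply]⟩
  rw [hjk]
  exact apply_mem_map₂ _ trivial trivial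

theorem finrank_add_finrank_le_finrank_map₂_crossProduct (V W : Submodule F (Fin 3 → F)) :
    finrank F V + finrank F W ≤ 3 + finrank F (map₂ (crossProduct (R := F)) V W) := by
  have hle : ∀ U : Submodule F (Fin 3 → F), finrank F U ≤ 3 := fun U =>
    (Submodule.finrank_le U).trans_eq (by simp)
  have hlt : ∀ U : Submodule F (Fin 3 → F), U ≠ ⊤ → finrank F U ≤ 2 := fun U hU =>
    Nat.le_of_lt_succ ((Submodule.finrank_lt hU).trans_eq (by simp))
  rcases eq_or_ne V ⊥ with rfl | hV₀
  · simpa using (hle W).trans (Nat.le_add_right 3 _)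
  rcases eq_or_ne W ⊥ with rfl | hW₀
  · simpa using (hle V).trans (Nat.le_add_right 3 _)
  obtain ⟨v, hv, hv0⟩ := exists_mem_ne_zero_of_ne_bot hV₀
  obtain ⟨w, hw, hw0⟩ := exists_mem_ne_zero_of_ne_bot hW₀
  have hVC : finrank F V ≤ finrank F (map₂ (crossProduct (R := F)) V W) + 1 := by
    refine (finrank_le_finrank_map_add_one V (ker_crossProduct_flip_le hw0)).trans ?_
    rw [← map₂_span_singleton_eq_map_flip]
    exact Nat.add_le_add_right (Submodule.finrank_mono
      (map₂_le_map₂_right ((span_singleton_le_iff_mem w W).2 hw))) 1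
  have hWC : finrank F W ≤ finrank F (map₂ (crossProduct (R := F)) V W) + 1 := by
    refine (finrank_le_finrank_map_add_one W (ker_crossProduct_le hv0)).trans ?_
    rw [← map₂_span_singleton_eq_map]
    exact Nat.add_le_add_right (Submodule.finrank_mono
      (map₂_le_map₂_left ((span_singleton_le_iff_mem v V).2 hv))) 1
  by_cases hV : V = ⊤
  · by_cases hW : W = ⊤
    · subst hV hW
      rw [map₂_crossProduct_top]
      simp
    · have := hlt W hW; omega
  · have := hlt V hV; omega

def blockCross (ι : Type*) : (Fin 3 × ι → F) →ₗ[F] (Fin 3 × ι → F) →ₗ[F] Fin 3 × ι → F :=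
  LinearMap.mk₂ F (fun g h p => ((fun a => g (a, p.2)) ⨯₃ (fun a => h (a, p.2))) p.1)
    (fun _ _ _ => funext fun p => congrFun (LinearMap.map_add₂ crossProduct _ _ _) p.1)
    (fun _ _ _ => funext fun p => congrFun (LinearMap.map_smul₂ crossProduct _ _ _) p.1)
    (fun _ _ _ => funext fun p => congrFun (map_add (crossProduct _) _ _) p.1)
    (fun _ _ _ => funext fun p => congrFun (map_smul (crossProduct _) _ _) p.1)

theorem blockCross_apply {ι : Type*} (g h : Fin 3 × ι → F) (p : Fin 3 × ι) :
    blockCross ι g h p = ((fun a => g (a, p.2)) ⨯₃ (fun a => h (a, p.2))) p.1 := rfl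

theorem finrank_add_finrank_le_finrank_map₂_blockCross {ι : Type*} [Fintype ι] [DecidableEq ι]
    (V W : Submodule F (Fin 3 × ι → F)) :
    finrank F V + finrank F W ≤ 3 * Fintype.card ι + finrank F (map₂ (blockCross ι) V W) := by
  induction hn : Fintype.card ι generalizing ι with
  | zero =>
    have : IsEmpty ι := Fintype.card_eq_zero_iff.1 hn
    have h0 : ∀ U : Submodule F (Fin 3 × ι → F), finrank F U = 0 := fun U =>
      Nat.eq_zero_of_le_zero ((Submodule.finrank_le U).trans_eq (by simp))
    simp [h0]
  | succ n ih =>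
    obtain ⟨i₀⟩ : Nonempty ι := Fintype.card_pos_iff.1 (by omega)
    let π : (Fin 3 × ι → F) →ₗ[F] Fin 3 → F := LinearMap.funLeft F F fun a => (a, i₀)
    let ρ : (Fin 3 × ι → F) →ₗ[F] Fin 3 × {i // i ≠ i₀} → F :=
      LinearMap.funLeft F F (Prod.map id Subtype.val)
    have hker : LinearMap.ker π ⊓ LinearMap.ker ρ = ⊥ := by
      refine eq_bot_iff.2 fun x ⟨hπx, hρx⟩ => (Submodule.mem_bot F).2 (funext fun ⟨a, i⟩ => ?_)
      rcases eq_or_ne i i₀ with rfl | hi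
      · exact congrFun hπx a
      · exact congrFun hρx (a, ⟨i, hi⟩)
    have hπ : ∀ g h, π (blockCross ι g h) = π g ⨯₃ π h := fun _ _ => rfl
    have hρ : ∀ g h, ρ (blockCross ι g h) = blockCross _ (ρ g) (ρ h) := fun _ _ => rfl
    set C := map₂ (blockCross ι) V W
    have hCπ : map₂ crossProduct (V.map π) (W.map π) ≤ C.map π := by
      refine map₂_le.2 ?_
      rintro _ ⟨g, hg, rfl⟩ _ ⟨h, hh, rfl⟩
      exact ⟨_, apply_mem_map₂ _ hg hh, hπ g h⟩
    have hCρ : map₂ (blockCross _) ((V ⊓ LinearMap.ker π).map ρ) ((W ⊓ LinearMap.ker π).map ρ) ≤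
        (C ⊓ LinearMap.ker π).map ρ := by
      refine map₂_le.2 ?_
      rintro _ ⟨g, ⟨hg, hπg⟩, rfl⟩ _ ⟨h, ⟨hh, -⟩, rfl⟩
      refine ⟨_, ⟨apply_mem_map₂ _ hg hh, ?_⟩, hρ g h⟩
      rw [SetLike.mem_coe, LinearMap.mem_ker, hπ, LinearMap.mem_ker.1 hπg, map_zero,
        LinearMap.zero_apply]
    have hcard : Fintype.card {i // i ≠ i₀} = n := by simp [Fintype.card_subtype_compl, hn]
    have hblock := finrank_add_finrank_le_finrank_map₂_crossProduct (V.map π) (W.map π)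
    have hrest := ih ((V ⊓ LinearMap.ker π).map ρ) ((W ⊓ LinearMap.ker π).map ρ) hcard
    have hCπ' := Submodule.finrank_mono hCπ
    have hCρ' := Submodule.finrank_mono hCρ
    rw [finrank_eq_finrank_map_add_finrank_map_inf_ker hker V,
      finrank_eq_finrank_map_add_finrank_map_inf_ker hker W,
      finrank_eq_finrank_map_add_finrank_map_inf_ker hker C]
    omega

end Cross

section LeviCivita

theorem sum_fin_three_fun {α M : Type*} [Fintype α] [AddCommMonoid M] (T : (Fin 3 → α) → M) :
    ∑ x, T x = ∑ p, ∑ q, ∑ s, T ![p, q, s] := by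
  simp only [← (Fin.consEquiv fun _ => α).sum_comp, Fintype.sum_prod_type, Fintype.sum_unique]
  refine Finset.sum_congr rfl fun p _ => Finset.sum_congr rfl fun q _ =>
    Finset.sum_congr rfl fun s _ => congrArg T ?_
  ext i
  fin_cases i <;> rfl

theorem sum_leviCivitaSum_mul (m : ℕ) (g h : Fin 3 × Fin m → F) (p : Fin 3 × Fin m) :
    ∑ q, ∑ s, leviCivitaSum m p q s * (g q * h s) = blockCross (Fin m) g h p := by
  obtain ⟨a, i⟩ := p
  have hε : ∀ b j c l, (leviCivitaSum m (a, i) (b, j) (c, l) : F) =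
      if j = i then if l = i then leviCivita a b c else 0 else 0 := by
    intro b j c l
    unfold leviCivitaSum
    split_ifs <;> simp_all
  simp only [Fintype.sum_prod_type, hε, ite_mul, zero_mul]
  fin_cases a <;> simp [blockCross_apply, cross_apply, Fin.sum_univ_three, leviCivita] <;> ring

theorem tensorContract_leviCivitaSum (m : ℕ) (f : Fin 3 → Fin 3 × Fin m → F) :
    tensorContract (fun x : Fin 3 → Fin 3 × Fin m => (leviCivitaSum m (x 0) (x 1) (x 2) : F)) f =
      f 0 ⬝ᵥ blockCross (Fin m) (f 1) (f 2) := by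
  simp only [tensorContract, sum_fin_three_fun, Fin.prod_univ_three, dotProduct,
    ← sum_leviCivitaSum_mul, Finset.mul_sum]
  refine Finset.sum_congr rfl fun p _ => Finset.sum_congr rfl fun q _ =>
    Finset.sum_congr rfl fun s _ => ?_
  simp only [Matrix.cons_val_zero, Matrix.cons_val_one, Matrix.cons_val_two, Matrix.tail_cons,
    Matrix.head_cons]
  ring

theorem three_mul_le_of_leviCivitaSum_eq_sum {m r : ℕ} (S : Fin r → (Fin 3 → Fin 3 × Fin m) → F)
    (hS : ∀ k, IsSliceOne (S k))
    (hT : ∀ x, (leviCivitaSum m (x 0) (x 1) (x 2) : F) = ∑ k, S k x) : 3 * m ≤ r := by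
  obtain ⟨V, hdim, hV⟩ := exists_subspaces_tensorContract_eq_zero S hS
  simp_rw [← hT] at hV
  have horth : ∀ f ∈ V 0, ∀ g ∈ map₂ (blockCross (Fin m)) (V 1) (V 2), f ⬝ᵥ g = 0 := by
    intro f hf
    suffices map₂ (blockCross (Fin m)) (V 1) (V 2) ≤ LinearMap.ker (dotProductBilin F F f) from
      fun g hg => this hg
    refine map₂_le.2 fun g hg h hh => LinearMap.mem_ker.2 ?_
    rw [dotProductBilin_apply_apply]
    have hfgh := tensorContract_leviCivitaSum m ![f, g, h]
    rw [hV ![f, g, h] fun i => by fin_cases i <;> assumption] at hfgh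
    exact hfgh.symm
  have h₀ := finrank_add_finrank_le_card_of_dotProduct_eq_zero horth
  have h₁₂ := finrank_add_finrank_le_finrank_map₂_blockCross (V 1) (V 2)
  simp only [Fin.sum_univ_three, Fintype.card_prod, Fintype.card_fin] at hdim h₀ h₁₂
  omega

end LeviCivita

end

theorem sliceRank_leviCivitaSum_general {F : Type*} [Field F] (m : ℕ) :
    sliceRank (fun x : Fin 3 → Fin 3 × Fin m => (leviCivitaSum m (x 0) (x 1) (x 2) : F)) = 3 * m := by
  refine le_antisymm ?_ (le_sliceRank fun _ S hS hT => three_mul_le_of_leviCivitaSum_eq_sum S hS hT)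
  simpa using sliceRank_le_card
    (fun x : Fin 3 → Fin 3 × Fin m => (leviCivitaSum m (x 0) (x 1) (x 2) : F)) 0

theorem sliceRank_leviCivitaSum {F : Type*} [Field F] (h2 : (2 : F) ≠ 0) (m : ℕ) :
    sliceRank (fun x : Fin 3 → Fin 3 × Fin m => (leviCivitaSum m (x 0) (x 1) (x 2) : F)) = 3 * m :=
  sliceRank_leviCivitaSum_general m
end

section
/- The Levi-Civita tensor $\epsilon$ on $\{1,2,3\}^3$ over a field of characteristic not 2 has slice rank exactly 3. -/
open scoped BigOperators

section Aux

variable {F : Type*} [Field F]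

lemma lc_cyc (a b c : Fin 3) : (leviCivita b c a : F) = leviCivita a b c := by
  fin_cases a <;> fin_cases b <;> fin_cases c <;>
    simp (config := { decide := true }) [leviCivita]

lemma lc_cyc' (a b c : Fin 3) : (leviCivita c a b : F) = leviCivita a b c :=
  (lc_cyc b c a).trans (lc_cyc a b c)

lemma lc_swap (a b c : Fin 3) : (leviCivita b a c : F) = -leviCivita a b c := by
  fin_cases a <;> fin_cases b <;> fin_cases c <;>
    simp (config := { decide := true }) [leviCivita]

lemma lc_perm1 (a b c : Fin 3) :
    (leviCivita (![1,2,0] a) (![1,2,0] b) (![1,2,0] c) : F) = leviCivita a b c := by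
  fin_cases a <;> fin_cases b <;> fin_cases c <;>
    simp (config := { decide := true }) [leviCivita]

lemma lc_perm2 (a b c : Fin 3) :
    (leviCivita (![2,0,1] a) (![2,0,1] b) (![2,0,1] c) : F) = leviCivita a b c := by
  fin_cases a <;> fin_cases b <;> fin_cases c <;>
    simp (config := { decide := true }) [leviCivita]

/-- No decomposition with both slices along the first axis. -/
lemma lemA (f g : Fin 3 → F) (v w : Fin 3 → Fin 3 → F)
    (H : ∀ a b c : Fin 3, (leviCivita a b c : F) = f a * v b c + g a * w b c) : False := by
  have h00 := H 0 1 2; have h10 := H 1 1 2; have h20 := H 2 1 2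
  have h11 := H 1 2 0; have h12 := H 1 0 1; have h22 := H 2 0 1
  simp (config := { decide := true }) [leviCivita] at h00 h10 h20 h11 h12 h22
  have eA : (f 1 * g 2 - f 2 * g 1) * v 1 2 = 0 := by linear_combination g 1 * h20 - g 2 * h10
  have eB : (f 1 * g 2 - f 2 * g 1) * w 1 2 = 0 := by linear_combination f 2 * h10 - f 1 * h20
  have eD : f 1 * g 2 - f 2 * g 1 = 0 := by
    linear_combination f 0 * eA + g 0 * eB + (f 1 * g 2 - f 2 * g 1) * h00
  have : (1 : F) = 0 := by
    linear_combination (f 2 * v 0 1 + g 2 * w 0 1) * h11 + h22 -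
      (f 2 * v 2 0 + g 2 * w 2 0) * h12 + (v 2 0 * w 0 1 - v 0 1 * w 2 0) * eD
  exact one_ne_zero this

lemma lemB0 (f g : Fin 3 → F) (v w : Fin 3 → Fin 3 → F)
    (H : ∀ a b c : Fin 3, (leviCivita a b c : F) = f a * v b c + g b * w a c) : f 0 = 0 := by
  by_contra hf0
  have h1 := H 0 1 0; have h2 := H 1 1 0; have h3 := H 0 2 0
  have h4 := H 1 2 0; have h5 := H 2 1 0
  simp (config := { decide := true }) [leviCivita] at h1 h2 h3 h4 h5
  have e1 : g 1 * (f 0 * w 1 0 - f 1 * w 0 0) = 0 := by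
    linear_combination f 1 * h1 - f 0 * h2
  have e2 : g 2 * (f 0 * w 1 0 - f 1 * w 0 0) = f 0 := by
    linear_combination f 1 * h3 - f 0 * h4
  have e3 : g 1 * (f 0 * w 2 0 - f 2 * w 0 0) = -f 0 := by
    linear_combination f 2 * h1 - f 0 * h5
  have hc : (f 0 * w 1 0 - f 1 * w 0 0) ≠ 0 := by
    intro h; rw [h, mul_zero] at e2; exact hf0 e2.symm
  have hg1 : g 1 = 0 := by
    rcases mul_eq_zero.mp e1 with h | h
    · exact h
    · exact absurd h hc
  rw [hg1, zero_mul] at e3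
  exact hf0 (by linear_combination e3)

/-- No decomposition with slices along the first and second axes. -/
lemma lemB (f g : Fin 3 → F) (v w : Fin 3 → Fin 3 → F)
    (H : ∀ a b c : Fin 3, (leviCivita a b c : F) = f a * v b c + g b * w a c) : False := by
  have hf0 : f 0 = 0 := lemB0 f g v w H
  have hf1 : f 1 = 0 := by
    have := lemB0 (fun x => f (![1,2,0] x)) (fun x => g (![1,2,0] x))
      (fun b c => v (![1,2,0] b) (![1,2,0] c)) (fun a c => w (![1,2,0] a) (![1,2,0] c))
      (fun a b c => by
        have := H (![1,2,0] a) (![1,2,0] b) (![1,2,0] c)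
        rwa [lc_perm1] at this)
    simpa using this
  have h6 := H 0 1 2; have h7 := H 1 1 2; have h8 := H 1 0 2
  simp (config := { decide := true }) [leviCivita] at h6 h7 h8
  have hg1 : g 1 = 0 := by
    linear_combination g 0 * h7 - g 1 * h8 + (g 0 * v 1 2 - g 1 * v 0 2) * hf1
  exact one_ne_zero (α := F) (by linear_combination h6 + v 1 2 * hf0 + w 0 2 * hg1)

lemma restr0 (v : (Fin 3 → Fin 3) → F)
    (hv : ∀ x y : Fin 3 → Fin 3, (∀ j, j ≠ (0 : Fin 3) → x j = y j) → v x = v y)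
    (a b c : Fin 3) : v ![a, b, c] = v ![0, b, c] := by
  apply hv
  intro j hj
  fin_cases j
  · exact absurd rfl hj
  · rfl
  · rfl

lemma restr1 (v : (Fin 3 → Fin 3) → F)
    (hv : ∀ x y : Fin 3 → Fin 3, (∀ j, j ≠ (1 : Fin 3) → x j = y j) → v x = v y)
    (a b c : Fin 3) : v ![a, b, c] = v ![a, 0, c] := by
  apply hv
  intro j hj
  fin_cases j
  · rfl
  · exact absurd rfl hj
  · rfl

lemma restr2 (v : (Fin 3 → Fin 3) → F)
    (hv : ∀ x y : Fin 3 → Fin 3, (∀ j, j ≠ (2 : Fin 3) → x j = y j) → v x = v y)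
    (a b c : Fin 3) : v ![a, b, c] = v ![a, b, 0] := by
  apply hv
  intro j hj
  fin_cases j
  · rfl
  · rfl
  · exact absurd rfl hj

lemma lc_expand (a b c : Fin 3) :
    (leviCivita a b c : F) =
      ∑ k : Fin 3, (if a = k then (1 : F) else 0) * leviCivita k b c := by
  simp [ite_mul, Finset.sum_ite_eq]

end Aux

theorem sliceRank_leviCivita {F : Type*} [Field F] (h2 : (2 : F) ≠ 0) :
    sliceRank (fun x : Fin 3 → Fin 3 => (leviCivita (x 0) (x 1) (x 2) : F)) = 3 := by
  have hmem : 3 ∈ {r | ∃ S : Fin r → ((Fin 3 → Fin 3) → F),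
      (∀ k, IsSliceOne (S k)) ∧
      ∀ x, (leviCivita (x 0) (x 1) (x 2) : F) = ∑ k, S k x} := by
    refine ⟨fun k x => (if x 0 = k then (1 : F) else 0) * leviCivita k (x 1) (x 2), ?_, ?_⟩
    · intro k
      refine ⟨0, fun a => if a = k then (1 : F) else 0,
        fun x => leviCivita k (x 1) (x 2), ?_, fun x => rfl⟩
      intro x y h
      show leviCivita k (x 1) (x 2) = leviCivita k (y 1) (y 2)
      rw [h 1 (by decide), h 2 (by decide)]
    · intro x
      exact lc_expand (x 0) (x 1) (x 2)
  refine le_antisymm (Nat.sInf_le hmem) (le_csInf ⟨3, hmem⟩ ?_)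
  rintro r ⟨S, hS1, hS2⟩
  by_contra hlt
  push_neg at hlt
  interval_cases r
  · -- r = 0
    have h := hS2 ![0, 1, 2]
    simp (config := { decide := true }) [leviCivita] at h
  · -- r = 1
    obtain ⟨i, u, v, hv, huv⟩ := hS1 0
    have hsum : ∀ x : Fin 3 → Fin 3,
        (leviCivita (x 0) (x 1) (x 2) : F) = u (x i) * v x := by
      intro x
      have h := hS2 x
      rwa [Fin.sum_univ_one, huv x] at h
    fin_cases i
    · exact lemA u (fun _ => 0) (fun b c => v ![0, b, c]) (fun _ _ => 0)
        (fun a b c => by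
          have h := hsum ![a, b, c]
          rw [restr0 v hv] at h
          simpa using h)
    · exact lemA (fun t => -u t) (fun _ => 0) (fun b c => v ![b, 0, c]) (fun _ _ => 0)
        (fun a b c => by
          have h := hsum ![b, a, c]
          rw [restr1 v hv] at h
          simp at h
          have hs := lc_swap (F := F) a b c
          linear_combination hs - h)
    · exact lemA u (fun _ => 0) (fun b c => v ![b, c, 0]) (fun _ _ => 0)
        (fun a b c => by
          have h := hsum ![b, c, a]
          rw [restr2 v hv] at h
          simp at h
          have hc := lc_cyc (F := F) a b c
          linear_combination h - hc)
  · -- r = 2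
    obtain ⟨i1, u1, v1, hv1, huv1⟩ := hS1 0
    obtain ⟨i2, u2, v2, hv2, huv2⟩ := hS1 1
    have hsum : ∀ x : Fin 3 → Fin 3,
        (leviCivita (x 0) (x 1) (x 2) : F) = u1 (x i1) * v1 x + u2 (x i2) * v2 x := by
      intro x
      have h := hS2 x
      rwa [Fin.sum_univ_two, huv1 x, huv2 x] at h
    fin_cases i1 <;> fin_cases i2
    · -- (0,0)
      exact lemA u1 u2 (fun b c => v1 ![0, b, c]) (fun b c => v2 ![0, b, c])
        (fun a b c => by
          have h := hsum ![a, b, c]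
          rw [restr0 v1 hv1, restr0 v2 hv2] at h
          simpa using h)
    · -- (0,1)
      exact lemB u1 u2 (fun b c => v1 ![0, b, c]) (fun a c => v2 ![a, 0, c])
        (fun a b c => by
          have h := hsum ![a, b, c]
          rw [restr0 v1 hv1, restr1 v2 hv2] at h
          simpa using h)
    · -- (0,2)
      exact lemB u2 u1 (fun b c => v2 ![b, c, 0]) (fun a c => v1 ![0, c, a])
        (fun a b c => by
          have h := hsum ![b, c, a]
          rw [restr0 v1 hv1, restr2 v2 hv2] at h
          simp at h
          have hc := lc_cyc (F := F) a b c
          linear_combination h - hc)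
    · -- (1,0)
      exact lemB u2 u1 (fun b c => v2 ![0, b, c]) (fun a c => v1 ![a, 0, c])
        (fun a b c => by
          have h := hsum ![a, b, c]
          rw [restr1 v1 hv1, restr0 v2 hv2] at h
          simp at h
          linear_combination h)
    · -- (1,1)
      exact lemA (fun t => -u1 t) (fun t => -u2 t)
        (fun b c => v1 ![b, 0, c]) (fun b c => v2 ![b, 0, c])
        (fun a b c => by
          have h := hsum ![b, a, c]
          rw [restr1 v1 hv1, restr1 v2 hv2] at h
          simp at h
          have hs := lc_swap (F := F) a b c
          linear_combination hs - h)
    · -- (1,2)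
      exact lemB u1 u2 (fun b c => v1 ![c, 0, b]) (fun a c => v2 ![c, a, 0])
        (fun a b c => by
          have h := hsum ![c, a, b]
          rw [restr1 v1 hv1, restr2 v2 hv2] at h
          simp at h
          have hc := lc_cyc' (F := F) a b c
          linear_combination h - hc)
    · -- (2,0)
      exact lemB u1 u2 (fun b c => v1 ![b, c, 0]) (fun a c => v2 ![0, c, a])
        (fun a b c => by
          have h := hsum ![b, c, a]
          rw [restr2 v1 hv1, restr0 v2 hv2] at h
          simp at h
          have hc := lc_cyc (F := F) a b c
          linear_combination h - hc)
    · -- (2,1)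
      exact lemB u2 u1 (fun b c => v2 ![c, 0, b]) (fun a c => v1 ![c, a, 0])
        (fun a b c => by
          have h := hsum ![c, a, b]
          rw [restr2 v1 hv1, restr1 v2 hv2] at h
          simp at h
          have hc := lc_cyc' (F := F) a b c
          linear_combination h - hc)
    · -- (2,2)
      exact lemA u1 u2 (fun b c => v1 ![b, c, 0]) (fun b c => v2 ![b, c, 0])
        (fun a b c => by
          have h := hsum ![b, c, a]
          rw [restr2 v1 hv1, restr2 v2 hv2] at h
          simp at h
          have hc := lc_cyc (F := F) a b c
          linear_combination h - hc)
end

section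
/- Let $\mathbb{F}$ be a field. For any finite set $X$ and functions $a_1,\dots,a_r: X \to \mathbb{F}$, there exists $h: X \to \mathbb{F}$ with $\sum_{x} h(x) a_i(x) = 0$ for $i=1,\dots,r$ and $|\{x : h(x) = 0\}| \leq r$. -/
open scoped BigOperators

open Module

lemma key_exists_finset {F : Type*} [Field F] {X : Type*} [Fintype X] :
    ∀ (d : ℕ) (V : Type*) [AddCommGroup V] [Module F V] [FiniteDimensional F V],
      finrank F V = d → ∀ v : X → (V →ₗ[F] F), (∀ u : V, (∀ x, v x u = 0) → u = 0) →
      ∃ T : Finset X, T.card = d ∧ ∀ g : X → F, ∃ u : V, ∀ x ∈ T, v x u = g x := by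
  classical
  intro d
  induction d with
  | zero =>
    intro V _ _ _ hd v hv
    refine ⟨∅, rfl, fun g => ⟨0, fun x hx => absurd hx (Finset.notMem_empty x)⟩⟩
  | succ d ih =>
    intro V _ _ _ hd v hv
    have hnt : Nontrivial V := by
      apply Module.nontrivial_of_finrank_pos (R := F)
      omega
    obtain ⟨u₀, hu₀⟩ := exists_ne (0 : V)
    have hx₀ : ∃ x₀, v x₀ u₀ ≠ 0 := by
      by_contra hcon
      push_neg at hcon
      exact hu₀ (hv u₀ hcon)
    obtain ⟨x₀, hx₀⟩ := hx₀
    set V' := LinearMap.ker (v x₀) with hV'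
    have hsurj : Function.Surjective (v x₀) := by
      intro c
      refine ⟨(c / v x₀ u₀) • u₀, ?_⟩
      rw [map_smul, smul_eq_mul, div_mul_cancel₀ _ hx₀]
    have hrank : finrank F V' = d := by
      have h1 := LinearMap.finrank_range_add_finrank_ker (v x₀)
      rw [LinearMap.range_eq_top.mpr hsurj, finrank_top, finrank_self, hd, ← hV'] at h1
      omega
    have hker : ∀ u : V', (∀ x, ((v x).comp V'.subtype) u = 0) → u = 0 := by
      intro u hu
      ext
      exact hv u.1 (fun x => hu x)
    obtain ⟨T', hT'card, hT'surj⟩ := ih V' hrank (fun x => (v x).comp V'.subtype) hker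
    have hx₀T' : x₀ ∉ T' := by
      intro hmem
      obtain ⟨u, hu⟩ := hT'surj (fun _ => 1)
      have h1 := hu x₀ hmem
      have h2 : v x₀ u.1 = 0 := u.2
      simp only [LinearMap.comp_apply, Submodule.coe_subtype] at h1
      rw [h2] at h1
      exact one_ne_zero h1.symm
    refine ⟨insert x₀ T', by rw [Finset.card_insert_of_notMem hx₀T', hT'card], ?_⟩
    intro g
    set c := g x₀ / v x₀ u₀ with hc
    obtain ⟨u', hu'⟩ := hT'surj (fun x => g x - c * v x u₀)
    refine ⟨u'.1 + c • u₀, ?_⟩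
    intro x hx
    rcases Finset.mem_insert.mp hx with h | h
    · subst h
      have h2 : v x u'.1 = 0 := u'.2
      rw [map_add, h2, map_smul, smul_eq_mul, zero_add, hc, div_mul_cancel₀ _ hx₀]
    · have h1 := hu' x h
      simp only [LinearMap.comp_apply, Submodule.coe_subtype] at h1
      rw [map_add, h1, map_smul, smul_eq_mul]
      ring

theorem exists_orthogonal_with_few_zeros {F : Type*} [Field F] (X : Type*) [Fintype X]
    {r : ℕ} (a : Fin r → X → F) :
    ∃ h : X → F, (∀ i, ∑ x, h x * a i x = 0) ∧ Set.ncard {x : X | h x = 0} ≤ r := by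
  classical
  set L : Fin r → ((X → F) →ₗ[F] F) :=
    fun i => ∑ x, a i x • (LinearMap.proj x : (X → F) →ₗ[F] F) with hL
  have hLapp : ∀ i (h : X → F), L i h = ∑ x, h x * a i x := by
    intro i h
    simp [hL, LinearMap.sum_apply, mul_comm]
  set φ : (X → F) →ₗ[F] (Fin r → F) := LinearMap.pi L with hφ
  set W := LinearMap.ker φ with hW
  have hcodim : Fintype.card X - finrank F W ≤ r := by
    have h1 := LinearMap.finrank_range_add_finrank_ker φ
    rw [← hW] at h1
    have h2 : finrank F (LinearMap.range φ) ≤ r := by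
      have := Submodule.finrank_le (LinearMap.range φ)
      rwa [finrank_fintype_fun_eq_card, Fintype.card_fin] at this
    rw [finrank_fintype_fun_eq_card] at h1
    omega
  have hker : ∀ u : W, (∀ x, ((LinearMap.proj x : (X → F) →ₗ[F] F).comp W.subtype) u = 0)
      → u = 0 := by
    intro u hu
    ext x
    exact hu x
  obtain ⟨T, hTcard, hTsurj⟩ := key_exists_finset (finrank F W) W rfl
    (fun x => (LinearMap.proj x : (X → F) →ₗ[F] F).comp W.subtype) hker
  obtain ⟨u, hu⟩ := hTsurj (fun _ => 1)
  refine ⟨u.1, ?_, ?_⟩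
  · intro i
    have h1 : φ u.1 = 0 := u.2
    have := congrFun h1 i
    simpa [hφ, LinearMap.pi_apply, hLapp] using this
  · have hsub : {x : X | u.1 x = 0} ⊆ (Tᶜ : Finset X) := by
      intro x hx
      simp only [Finset.coe_compl, Set.mem_compl_iff, Finset.mem_coe]
      intro hmem
      have := hu x hmem
      simp only [LinearMap.comp_apply, Submodule.coe_subtype, LinearMap.proj_apply] at this
      rw [Set.mem_setOf_eq.mp hx] at this
      exact one_ne_zero this.symm
    calc Set.ncard {x : X | u.1 x = 0} ≤ Set.ncard ((Tᶜ : Finset X) : Set X) :=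
          Set.ncard_le_ncard hsub (Set.toFinite _)
      _ = (Tᶜ : Finset X).card := Set.ncard_coe_finset _
      _ = Fintype.card X - T.card := Finset.card_compl T
      _ ≤ r := by rw [hTcard]; exact hcodim
end

section
/- Let $T: X_1 \times \cdots \times X_d \to \mathbb{F}$ have a slice-rank decomposition $T(x_1,\dots,x_d) = \sum_{i=1}^d \sum_{j=1}^{r_i} a_{ij}(x_i) b_{ij}(\bar{x_i})$ where for each $i$ the functions $a_{i1},\dots,a_{ir_i}$ are linearly independent, and choose dual functions $a_{ij'}^*$ with $\sum_{x_i} a_{ij'}^*(x_i) a_{ij}(x_i) = \delta_{jj'}$. Then there exist functions $b_{ij}'$ such that $T(x_1,\dots,x_d) = \sum_{i=1}^d \sum_{j=1}^{r_i} a_{ij}(x_i) b_{ij}'(\bar{x_i})$ and such that $\sum_{x_s} a_{sj_s}^*(x_s) b_{tj_t}'(\bar{x_t})(\dots,x_s,\dots) = 0$ whenever $1 \leq s < t \leq d$. -/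
open scoped BigOperators
section Aux
variable {F : Type*} [Field F] {d : ℕ} {X : Fin d → Type*} [∀ i, Fintype (X i)]
  {r : Fin d → ℕ}
def Ct (astar : ∀ i, Fin (r i) → X i → F) (s : Fin d) (j : Fin (r s))
    (f : (∀ k, X k) → F) : (∀ k, X k) → F :=
  fun x => ∑ y, astar s j y * f (Function.update x s y)
def Qop (astar a : ∀ i, Fin (r i) → X i → F) (k : Fin d)
    (f : (∀ k, X k) → F) : (∀ k, X k) → F :=
  fun x => f x - ∑ j, a k j (x k) * Ct astar k j f x
def Pop (astar a : ∀ i, Fin (r i) → X i → F) :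
    ℕ → ((∀ k, X k) → F) → ((∀ k, X k) → F)
  | 0, f => f
  | (n+1), f =>
    if h : n < d then Qop astar a ⟨n, h⟩ (Pop astar a n f) else Pop astar a n f

variable {astar a : ∀ i, Fin (r i) → X i → F}

lemma Ct_congr {s : Fin d} {j : Fin (r s)} {f : (∀ k, X k) → F} {x y : ∀ k, X k}
    (h : ∀ k, k ≠ s → x k = y k) : Ct astar s j f x = Ct astar s j f y := by
  unfold Ct
  refine Finset.sum_congr rfl fun z _ => ?_
  have : Function.update x s z = Function.update y s z := by
    funext k
    rcases eq_or_ne k s with rfl | hk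
    · simp
    · simp [Function.update_of_ne hk, h k hk]
  rw [this]

lemma Ct_update_self {s : Fin d} {j : Fin (r s)} {f : (∀ k, X k) → F}
    (x : ∀ k, X k) (y : X s) :
    Ct astar s j f (Function.update x s y) = Ct astar s j f x :=
  Ct_congr fun k hk => Function.update_of_ne hk _ _

lemma Ct_Qop_self {s : Fin d} {j : Fin (r s)} {f : (∀ k, X k) → F}
    (hdual : ∀ (j j' : Fin (r s)), ∑ y, astar s j' y * a s j y = if j = j' then 1 else 0) :
    ∀ x, Ct astar s j (Qop astar a s f) x = 0 := by
  intro x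
  have key : ∀ (j' : Fin (r s)) (y : X s),
      Ct astar s j' f (Function.update x s y) = Ct astar s j' f x :=
    fun j' y => Ct_update_self x y
  show ∑ y, astar s j y * Qop astar a s f (Function.update x s y) = 0
  simp only [Qop, Function.update_self, key, mul_sub]
  rw [Finset.sum_sub_distrib]
  have h2 : ∑ y, astar s j y * ∑ j', a s j' y * Ct astar s j' f x
      = ∑ y, astar s j y * f (Function.update x s y) := by
    simp only [Finset.mul_sum]
    rw [Finset.sum_comm]
    have : ∀ j' : Fin (r s), ∑ y, astar s j y * (a s j' y * Ct astar s j' f x)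
        = (if j' = j then 1 else 0) * Ct astar s j' f x := by
      intro j'
      rw [← hdual j' j]
      rw [Finset.sum_mul]
      exact Finset.sum_congr rfl fun y _ => by ring
    simp only [this, ite_mul, one_mul, zero_mul]
    rw [Finset.sum_ite_eq' Finset.univ j (fun j' => Ct astar s j' f x)]
    simp [Ct]
  rw [h2, sub_self]

lemma Ct_Qop_comm {s k : Fin d} {j : Fin (r s)} {f : (∀ k, X k) → F}
    (hks : k ≠ s) :
    ∀ x, Ct astar s j (Qop astar a k f) x = Qop astar a k (Ct astar s j f) x := by
  intro x
  show ∑ y, astar s j y * Qop astar a k f (Function.update x s y)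
      = Ct astar s j f x - ∑ j', a k j' (x k) * Ct astar k j' (Ct astar s j f) x
  simp only [Qop, mul_sub, Function.update_of_ne hks]
  rw [Finset.sum_sub_distrib]
  congr 1
  simp only [Ct, Finset.mul_sum]
  rw [Finset.sum_comm]
  refine Finset.sum_congr rfl fun j' _ => ?_
  rw [Finset.sum_comm]
  refine Finset.sum_congr rfl fun z _ => Finset.sum_congr rfl fun y _ => ?_
  rw [Function.update_comm (Ne.symm hks) y z x]
  ring

lemma Ct_Ct_zero {s t : Fin d} {js : Fin (r s)} {jt : Fin (r t)}
    {g : (∀ k, X k) → F} (hst : s ≠ t) (hg : ∀ x, Ct astar s js g x = 0) :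
    ∀ x, Ct astar s js (Ct astar t jt g) x = 0 := by
  intro x
  show ∑ y, astar s js y * Ct astar t jt g (Function.update x s y) = 0
  simp only [Ct, Finset.mul_sum]
  rw [Finset.sum_comm]
  have : ∀ z : X t, ∑ y, astar s js y * (astar t jt z * g (Function.update (Function.update x s y) t z)) = 0 := by
    intro z
    have h0 := hg (Function.update x t z)
    simp only [Ct] at h0
    calc ∑ y, astar s js y * (astar t jt z * g (Function.update (Function.update x s y) t z))
        = astar t jt z * ∑ y, astar s js y * g (Function.update (Function.update x t z) s y) := by
          rw [Finset.mul_sum]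
          refine Finset.sum_congr rfl fun y _ => ?_
          rw [Function.update_comm hst y z x]
          ring
      _ = 0 := by rw [h0, mul_zero]
  simp [this]

lemma Pop_succ (n : ℕ) (hn : n < d) (f : (∀ k, X k) → F) :
    Pop astar a (n+1) f = Qop astar a ⟨n, hn⟩ (Pop astar a n f) := by
  simp [Pop, hn]

lemma Qop_zero' {k : Fin d} {g : (∀ k, X k) → F} (hg : ∀ x, g x = 0) :
    ∀ x, Qop astar a k g x = 0 := by
  intro x; simp [Qop, Ct, hg]

lemma Ct_Pop_zero
    (hdual : ∀ i (j j' : Fin (r i)), ∑ y, astar i j' y * a i j y = if j = j' then 1 else 0)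
    {s : Fin d} {j : Fin (r s)} {f : (∀ k, X k) → F} :
    ∀ n, n ≤ d → s.val < n → ∀ x, Ct astar s j (Pop astar a n f) x = 0 := by
  intro n
  induction n with
  | zero => intro _ h; omega
  | succ n ih =>
    intro hnd hsn x
    have hn : n < d := by omega
    rw [Pop_succ n hn]
    rcases eq_or_ne s ⟨n, hn⟩ with rfl | hne
    · exact Ct_Qop_self (hdual _) x
    · have hsn' : s.val < n := by
        rcases Nat.lt_succ_iff_lt_or_eq.mp hsn with h | h
        · exact h
        · exact absurd (Fin.ext h) hne
      rw [Ct_Qop_comm (Ne.symm hne)]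
      exact Qop_zero' (fun y => ih (by omega) hsn' y) x

lemma Pop_tele (n : ℕ) (hn : n ≤ d) (f : (∀ k, X k) → F) (x : ∀ k, X k) :
    f x = Pop astar a n f x +
      ∑ s : Fin d, ∑ j, (if s.val < n then
        a s j (x s) * Ct astar s j (Pop astar a s.val f) x else 0) := by
  induction n with
  | zero => simp [Pop]
  | succ n ih =>
    have hnd : n < d := by omega
    rw [Pop_succ n hnd]
    have hih := ih (by omega)
    set g : (s : Fin d) → Fin (r s) → F :=
      fun s j => a s j (x s) * Ct astar s j (Pop astar a s.val f) x with hg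
    have split : ∀ s : Fin d,
        (∑ j, if s.val < n + 1 then g s j else 0)
        = (if s = ⟨n, hnd⟩ then ∑ j, g s j else 0)
          + ∑ j, (if s.val < n then g s j else 0) := by
      intro s
      rcases eq_or_ne s ⟨n, hnd⟩ with rfl | hne
      · simp
      · have hv : s.val ≠ n := fun h => hne (Fin.ext h)
        have : (s.val < n + 1) = (s.val < n) := by
          by_cases h : s.val < n
          · simp [h, Nat.lt_succ_of_lt h]
          · have : ¬ s.val < n + 1 := by omega
            simp [h, this]
        simp [hne, this]
    rw [Finset.sum_congr rfl fun s _ => split s, Finset.sum_add_distrib,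
      Finset.sum_ite_eq' Finset.univ (⟨n, hnd⟩ : Fin d) (fun s => ∑ j, g s j)]
    simp only [Finset.mem_univ, if_true]
    rw [hih]
    simp only [Qop, hg]
    ring

def Indep (i : Fin d) (f : (∀ k, X k) → F) : Prop :=
  ∀ x y, (∀ k, k ≠ i → x k = y k) → f x = f y

lemma indep_Ct {i : Fin d} {j : Fin (r i)} (f : (∀ k, X k) → F) :
    Indep i (Ct astar i j f) := fun _ _ h => Ct_congr h

lemma indep_Ct_other {i s : Fin d} {j : Fin (r s)} {f : (∀ k, X k) → F}
    (hf : Indep i f) : Indep i (Ct astar s j f) := by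
  intro x y hxy
  refine Finset.sum_congr rfl fun z _ => ?_
  congr 1
  refine hf _ _ fun k hk => ?_
  rcases eq_or_ne k s with rfl | hks
  · simp
  · simp [Function.update_of_ne hks, hxy k hk]

lemma indep_Qop {i k : Fin d} {f : (∀ k, X k) → F}
    (hf : Indep i f) (hk : k ≠ i) : Indep i (Qop astar a k f) := by
  intro x y hxy
  simp only [Qop]
  rw [hf x y hxy, hxy k hk]
  congr 1
  refine Finset.sum_congr rfl fun j _ => ?_
  rw [indep_Ct_other hf x y hxy]

lemma indep_Pop {i : Fin d} {f : (∀ k, X k) → F} :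
    ∀ n, n ≤ i.val → Indep i f → Indep i (Pop astar a n f) := by
  intro n
  induction n with
  | zero => intro _ hf; exact hf
  | succ n ih =>
    intro hn hf
    have hnd : n < d := lt_trans (by omega) i.isLt
    rw [Pop_succ n hnd]
    exact indep_Qop (ih (by omega) hf) (by intro h; have := congrArg Fin.val h; simp at this; omega)

lemma Ct_apply {s : Fin d} {j : Fin (r s)} (f : (∀ k, X k) → F) (x : ∀ k, X k) :
    Ct astar s j f x = ∑ y, astar s j y * f (Function.update x s y) := rfl

lemma sum4_comm {M : Type*} [AddCommMonoid M]
    (K : (s : Fin d) → Fin (r s) → (t : Fin d) → Fin (r t) → M) :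
    ∑ t, ∑ j, ∑ s, ∑ js, K s js t j = ∑ s, ∑ js, ∑ t, ∑ j, K s js t j := by
  calc ∑ t : Fin d, ∑ j : Fin (r t), ∑ s : Fin d, ∑ js : Fin (r s), K s js t j
      = ∑ t : Fin d, ∑ s : Fin d, ∑ j : Fin (r t), ∑ js : Fin (r s), K s js t j :=
        Finset.sum_congr rfl fun t _ => Finset.sum_comm
    _ = ∑ s : Fin d, ∑ t : Fin d, ∑ j : Fin (r t), ∑ js : Fin (r s), K s js t j :=
        Finset.sum_comm
    _ = ∑ s : Fin d, ∑ t : Fin d, ∑ js : Fin (r s), ∑ j : Fin (r t), K s js t j :=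
        Finset.sum_congr rfl fun s _ => Finset.sum_congr rfl fun t _ => Finset.sum_comm
    _ = ∑ s : Fin d, ∑ js : Fin (r s), ∑ t : Fin d, ∑ j : Fin (r t), K s js t j :=
        Finset.sum_congr rfl fun s _ => Finset.sum_comm

end Aux

theorem triangular_decomposition {F : Type*} [Field F] {d : ℕ} (hd : 2 ≤ d)
    (X : Fin d → Type*) [∀ i, Fintype (X i)]
    (T : (∀ i, X i) → F) {r : Fin d → ℕ}
    (a : ∀ i, Fin (r i) → X i → F) (b : ∀ i, Fin (r i) → (∀ k, X k) → F)
    (hb : ∀ i j, ∀ x y : ∀ k, X k, (∀ k, k ≠ i → x k = y k) → b i j x = b i j y)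
    (hT : ∀ x, T x = ∑ i, ∑ j, a i j (x i) * b i j x)
    (ha : ∀ i, LinearIndependent F (a i))
    (astar : ∀ i, Fin (r i) → X i → F)
    (hdual : ∀ i (j j' : Fin (r i)),
      ∑ y, astar i j' y * a i j y = if j = j' then 1 else 0) :
    ∃ b' : ∀ i, Fin (r i) → (∀ k, X k) → F,
      (∀ i j, ∀ x y : ∀ k, X k, (∀ k, k ≠ i → x k = y k) → b' i j x = b' i j y) ∧
      (∀ x, T x = ∑ i, ∑ j, a i j (x i) * b' i j x) ∧
      (∀ s t : Fin d, s < t → ∀ (js : Fin (r s)) (jt : Fin (r t)) (x : ∀ k, X k),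
        ∑ y : X s, astar s js y * b' t jt (Function.update x s y) = 0) := by
  classical
  refine ⟨fun s j x => Pop astar a s.val (b s j) x +
      ∑ t, ∑ j', (if s < t then
        a t j' (x t) * Ct astar s j (Pop astar a s.val (b t j')) x else 0),
    ?_, ?_, ?_⟩
  · -- independence from coordinate i
    intro i j x y hxy
    beta_reduce
    rw [indep_Pop i.val le_rfl (hb i j) x y hxy]
    congr 1
    refine Finset.sum_congr rfl fun t _ => Finset.sum_congr rfl fun j' _ => ?_
    by_cases hit : i < t
    · simp only [if_pos hit]
      rw [hxy t (Ne.symm (ne_of_lt hit)),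
        indep_Ct (Pop astar a i.val (b t j')) x y hxy]
    · simp [hit]
  · -- the decomposition identity
    intro x
    rw [hT x]
    beta_reduce
    have tele : ∀ (t : Fin d) (j : Fin (r t)),
        b t j x = Pop astar a t.val (b t j) x +
          ∑ s : Fin d, ∑ js, (if s < t then
            a s js (x s) * Ct astar s js (Pop astar a s.val (b t j)) x else 0) := by
      intro t j
      have h := Pop_tele (astar := astar) (a := a) t.val t.isLt.le (b t j) x
      simpa only [Fin.lt_def] using h
    have LHSeq : ∑ t, ∑ j, a t j (x t) * b t j x
        = (∑ t, ∑ j, a t j (x t) * Pop astar a t.val (b t j) x)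
          + ∑ t, ∑ j, ∑ s, ∑ js, (if s < t then
              a s js (x s) * a t j (x t)
                * Ct astar s js (Pop astar a s.val (b t j)) x else 0) := by
      rw [← Finset.sum_add_distrib]
      refine Finset.sum_congr rfl fun t _ => ?_
      rw [← Finset.sum_add_distrib]
      refine Finset.sum_congr rfl fun j _ => ?_
      rw [tele t j, mul_add]
      congr 1
      rw [Finset.mul_sum]
      refine Finset.sum_congr rfl fun s _ => ?_
      rw [Finset.mul_sum]
      refine Finset.sum_congr rfl fun js _ => ?_
      by_cases h : s < t
      · simp only [if_pos h]; ring
      · simp [h]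
    have RHSeq : (∑ t, ∑ j, a t j (x t) * (Pop astar a t.val (b t j) x +
          ∑ t', ∑ j', (if t < t' then
            a t' j' (x t') * Ct astar t j (Pop astar a t.val (b t' j')) x else 0)))
        = (∑ t, ∑ j, a t j (x t) * Pop astar a t.val (b t j) x)
          + ∑ s, ∑ js, ∑ t, ∑ j, (if s < t then
              a s js (x s) * a t j (x t)
                * Ct astar s js (Pop astar a s.val (b t j)) x else 0) := by
      rw [← Finset.sum_add_distrib]
      refine Finset.sum_congr rfl fun s _ => ?_
      rw [← Finset.sum_add_distrib]
      refine Finset.sum_congr rfl fun js _ => ?_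
      rw [mul_add]
      congr 1
      rw [Finset.mul_sum]
      refine Finset.sum_congr rfl fun t _ => ?_
      rw [Finset.mul_sum]
      refine Finset.sum_congr rfl fun j _ => ?_
      by_cases h : s < t
      · simp only [if_pos h]; ring
      · simp [h]
    rw [LHSeq, RHSeq]
    congr 1
    exact sum4_comm _
  · -- triangularity
    intro s t hst js jt x
    beta_reduce
    have hst' : s.val < t.val := Fin.lt_def.mp hst
    simp only [mul_add]
    rw [Finset.sum_add_distrib]
    have h1 : ∑ y, astar s js y * Pop astar a t.val (b t jt) (Function.update x s y)
        = 0 := Ct_Pop_zero hdual t.val t.isLt.le hst' x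
    rw [h1, zero_add]
    simp only [Finset.mul_sum]
    rw [Finset.sum_comm]
    refine Finset.sum_eq_zero fun t' _ => ?_
    rw [Finset.sum_comm]
    refine Finset.sum_eq_zero fun j' _ => ?_
    by_cases h : t < t'
    · simp only [if_pos h]
      have hs' : s ≠ t' := ne_of_lt (lt_trans hst h)
      have hupd : ∀ y : X s, Function.update x s y t' = x t' :=
        fun y => Function.update_of_ne (Ne.symm hs') _ _
      have hz : ∀ x', Ct astar s js (Ct astar t jt
          (Pop astar a t.val (b t' j'))) x' = 0 :=
        Ct_Ct_zero (ne_of_lt hst)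
          (Ct_Pop_zero hdual t.val t.isLt.le hst')
      calc ∑ y, astar s js y * (a t' j' (Function.update x s y t')
              * Ct astar t jt (Pop astar a t.val (b t' j')) (Function.update x s y))
          = a t' j' (x t') * Ct astar s js
              (Ct astar t jt (Pop astar a t.val (b t' j'))) x := by
            rw [Ct_apply, Finset.mul_sum]
            refine Finset.sum_congr rfl fun y _ => ?_
            rw [hupd y]; ring
        _ = 0 := by rw [hz x, mul_zero]
    · simp [h]
end
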